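/- arXiv:1901.08380 — 12 statements merged into one kernel-verified Lean document; each statement's English description precedes it below -/
import Mathlib

section
/- Let g(∂, λ) ∈ ℂ[∂, λ] be a polynomial, a priori allowed to depend on ∂, satisfying g(∂+λ, μ)·g(∂, λ) = g(∂+μ, λ)·g(∂, μ) as polynomials in ∂, λ, μ. Then g does not depend on ∂, i.e., g(∂, λ) ∈ ℂ[λ]. -/
open Polynomial

lemma taylor_coeff_top (p : ℂ[X]) (n : ℕ) (hp : p.natDegree ≤ n) (r : ℂ) :
    ((taylor r) p).coeff n = p.coeff n := by
  rw [taylor_coeff]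
  have hd : ((hasseDeriv n) p).natDegree ≤ 0 := by
    rw [natDegree_le_iff_coeff_eq_zero]
    intro N hN
    rw [hasseDeriv_coeff]
    have : p.coeff (N + n) = 0 := coeff_eq_zero_of_natDegree_lt (by omega)
    simp [this]
  rw [eval_eq_sum_range' (Nat.lt_of_le_of_lt hd Nat.one_pos)]
  simp [hasseDeriv_coeff]

lemma taylor_coeff_sub_one (p : ℂ[X]) (n : ℕ) (hn : 1 ≤ n) (hp : p.natDegree ≤ n) (r : ℂ) :
    ((taylor r) p).coeff (n - 1) = p.coeff (n - 1) + n * r * p.coeff n := by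
  rw [taylor_coeff]
  have hd : ((hasseDeriv (n - 1)) p).natDegree ≤ 1 := by
    rw [natDegree_le_iff_coeff_eq_zero]
    intro N hN
    rw [hasseDeriv_coeff]
    have : p.coeff (N + (n - 1)) = 0 := coeff_eq_zero_of_natDegree_lt (by omega)
    simp [this]
  rw [eval_eq_sum_range' (Nat.lt_of_le_of_lt hd Nat.one_lt_two)]
  rw [Finset.sum_range_succ, Finset.sum_range_succ, Finset.sum_range_zero]
  rw [hasseDeriv_coeff, hasseDeriv_coeff]
  have h1 : 1 + (n - 1) = n := by omega
  have h2 : 0 + (n - 1) = n - 1 := by omega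
  rw [h1, h2, Nat.choose_self]
  have h3 : n.choose (n - 1) = n := by
    rw [Nat.choose_symm hn, Nat.choose_one_right]
  rw [h3]
  push_cast
  ring

lemma coeff_mul_near (p q : ℂ[X]) (n : ℕ) (hn : 1 ≤ n)
    (hp : ∀ k, n < k → p.coeff k = 0) (hq : ∀ k, n < k → q.coeff k = 0) :
    (p * q).coeff (n + (n - 1)) =
      p.coeff n * q.coeff (n - 1) + p.coeff (n - 1) * q.coeff n := by
  rw [coeff_mul]
  rw [show (n + (n-1)) = 2*n - 1 by omega]
  have hsub : ({(n, n-1), (n-1, n)} : Finset (ℕ × ℕ)) ⊆ Finset.HasAntidiagonal.antidiagonal (2*n - 1) := by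
    intro x hx
    simp only [Finset.mem_insert, Finset.mem_singleton] at hx
    rcases hx with rfl | rfl <;> simp [Finset.HasAntidiagonal.mem_antidiagonal] <;> omega
  rw [← Finset.sum_subset hsub]
  · rw [Finset.sum_pair (by simp; omega)]
  · intro x hx hnot
    simp only [Finset.HasAntidiagonal.mem_antidiagonal] at hx
    simp only [Finset.mem_insert, Finset.mem_singleton] at hnot
    push_neg at hnot
    rcases Nat.lt_or_ge n x.1 with h1 | h1
    · rw [hp _ h1, zero_mul]
    · rcases Nat.lt_or_ge n x.2 with h2 | h2
      · rw [hq _ h2, mul_zero]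
      · exfalso
        have : x.1 = n ∧ x.2 = n - 1 ∨ x.1 = n - 1 ∧ x.2 = n := by omega
        rcases this with ⟨a,b⟩ | ⟨a,b⟩
        · exact hnot.1 (Prod.ext a b)
        · exact hnot.2 (Prod.ext a b)

/-- If `g ∈ ℂ[∂, λ]` satisfies
`g(∂+λ, μ)·g(∂, λ) = g(∂+μ, λ)·g(∂, μ)`, then `g` does not depend on `∂`,
i.e. there is a one-variable polynomial `h ∈ ℂ[λ]` with `g(∂, λ) = h(λ)`. -/
theorem stmt0 (g : MvPolynomial (Fin 2) ℂ)
    (h : ∀ d l m : ℂ,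
      MvPolynomial.eval ![d + l, m] g * MvPolynomial.eval ![d, l] g =
        MvPolynomial.eval ![d + m, l] g * MvPolynomial.eval ![d, m] g) :
    ∃ p : Polynomial ℂ, ∀ d l : ℂ, MvPolynomial.eval ![d, l] g = p.eval l := by
  classical
  set Φ : MvPolynomial (Fin 2) ℂ →+* Polynomial (Polynomial ℂ) :=
    MvPolynomial.eval₂Hom (Polynomial.C.comp Polynomial.C)
      ![Polynomial.X, Polynomial.C Polynomial.X] with hΦ
  set F : Polynomial (Polynomial ℂ) := Φ g with hFdef
  set f : ℂ → Polynomial ℂ := fun a => F.map (Polynomial.evalRingHom a) with hfdef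
  have key : ∀ a d : ℂ, (f a).eval d = MvPolynomial.eval ![d, a] g := by
    intro a d
    have hhom : (Polynomial.evalRingHom d).comp
        ((Polynomial.mapRingHom (Polynomial.evalRingHom a)).comp Φ)
        = (MvPolynomial.eval ![d, a]) := by
      apply MvPolynomial.ringHom_ext
      · intro r; simp [hΦ]
      · intro i; fin_cases i <;> simp [hΦ]
    exact RingHom.congr_fun hhom g
  have hcoeff : ∀ (a : ℂ) (k : ℕ), (f a).coeff k = (F.coeff k).eval a := by
    intro a k; simp [hfdef, Polynomial.coeff_map]
  have hpq : ∀ a b : ℂ, (taylor a (f b)) * f a = (taylor b (f a)) * f b := by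
    intro a b
    apply Polynomial.funext
    intro d
    rw [eval_mul, eval_mul, taylor_apply, taylor_apply, eval_comp, eval_comp]
    simp only [eval_add, eval_X, eval_C]
    rw [key, key, key, key]
    exact h d a b
  set n := F.natDegree with hn
  by_cases hn0 : n = 0
  · refine ⟨F.coeff 0, fun d l => ?_⟩
    rw [← key l d]
    have hFC : F = Polynomial.C (F.coeff 0) := eq_C_of_natDegree_eq_zero hn0
    rw [hfdef]
    simp only
    rw [hFC, Polynomial.map_C, eval_C]
    simp
  · exfalso
    have hn1 : 1 ≤ n := Nat.one_le_iff_ne_zero.mpr hn0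
    have hF0 : F ≠ 0 := by
      intro h0
      apply hn0
      rw [hn, h0, natDegree_zero]
    have hlc : F.leadingCoeff ≠ 0 := leadingCoeff_ne_zero.mpr hF0
    obtain ⟨a, ha, b, hb, hab⟩ := ((finite_setOf_isRoot hlc).infinite_compl).nontrivial
    simp only [Set.mem_compl_iff, Set.mem_setOf_eq, IsRoot.def] at ha hb
    -- coefficient facts
    have hhigh : ∀ (x : ℂ) (k : ℕ), n < k → (f x).coeff k = 0 := by
      intro x k hk
      rw [hcoeff, coeff_eq_zero_of_natDegree_lt hk]
      simp
    have hdeg : ∀ x : ℂ, (f x).natDegree ≤ n := fun x => natDegree_map_le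
    have htop : ∀ x : ℂ, (f x).coeff n = F.leadingCoeff.eval x := by
      intro x; rw [hcoeff]; rfl
    have hhighT : ∀ (x y : ℂ) (k : ℕ), n < k → ((taylor x) (f y)).coeff k = 0 := by
      intro x y k hk
      exact coeff_eq_zero_of_natDegree_lt (by rw [natDegree_taylor]; exact lt_of_le_of_lt (hdeg y) hk)
    have hdegT : ∀ x y : ℂ, ((taylor x) (f y)).natDegree ≤ n := by
      intro x y; rw [natDegree_taylor]; exact hdeg y
    have hcoeq := congrArg (fun p : Polynomial ℂ => p.coeff (n + (n - 1))) (hpq a b)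
    rw [coeff_mul_near _ _ n hn1 (hhighT a b) (hhigh a),
        coeff_mul_near _ _ n hn1 (hhighT b a) (hhigh b),
        taylor_coeff_top _ _ (hdeg b) a, taylor_coeff_top _ _ (hdeg a) b,
        taylor_coeff_sub_one _ _ hn1 (hdeg b) a, taylor_coeff_sub_one _ _ hn1 (hdeg a) b,
        htop a, htop b] at hcoeq
    set α := F.leadingCoeff.eval a with hα
    set β := F.leadingCoeff.eval b with hβ
    have hmain : (n : ℂ) * α * β * (a - b) = 0 := by linear_combination hcoeq
    have hna : (n : ℂ) ≠ 0 := Nat.cast_ne_zero.mpr hn0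
    exact mul_ne_zero (mul_ne_zero (mul_ne_zero hna ha) hb) (sub_ne_zero_of_ne hab) hmain
end

section
/- Let a, b ∈ ℂ with (a, b) ≠ (1, 0), and let g ∈ ℂ[μ] satisfy ((a−1)λ − μ + b)·g(λ+μ) = −μ·g(μ) as polynomials in λ and μ. Then g = 0. -/
open Polynomial

/-- For `a, b ∈ ℂ` with `(a, b) ≠ (1, 0)`, if `g ∈ ℂ[μ]` satisfies
`((a−1)λ − μ + b)·g(λ+μ) = −μ·g(μ)` as polynomials in `λ` and `μ`, then `g = 0`. -/
theorem stmt1 (a b : ℂ) (hab : (a, b) ≠ (1, 0)) (g : Polynomial ℂ)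
    (h : ∀ l m : ℂ, ((a - 1) * l - m + b) * g.eval (l + m) = -m * g.eval m) :
    g = 0 := by
  have hp : (C (a - 1) * X + C b) * g = 0 := by
    apply Polynomial.funext
    intro l
    have := h l 0
    simp only [sub_zero, add_zero, neg_zero, zero_mul] at this
    simpa using this
  have hpne : (C (a - 1) * X + C b) ≠ 0 := by
    intro hz
    by_cases ha : a = 1
    · have hb : b ≠ 0 := by
        intro hb; exact hab (by simp [ha, hb, Prod.ext_iff])
      rw [ha] at hz
      simp at hz
      exact hb hz
    · have := congrArg (fun p => Polynomial.coeff p 1) hz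
      simp [coeff_C] at this
      exact ha (by linear_combination this)
  rcases mul_eq_zero.mp hp with h1 | h2
  · exact absurd h1 hpne
  · exact h2
end

section
/- Define on the vector space with basis {L_m : m ≥ −1} ∪ {W_n : n ≥ 0} the brackets [L_m, L_n] = (m−n)L_{m+n}, [L_m, W_n] = ((a−1)(m+1) − n)W_{m+n} + b·W_{m+n+1}, [W_m, W_n] = 0 (with W_{−1} = 0 and terms with index out of range interpreted as 0 when appropriate). Then these brackets satisfy the Jacobi identity, so they define a Lie algebra structure. -/
/-! The structure constants make sense for all integer indices and define a bracket on the space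
with basis `L_m, W_n` (`m, n ∈ ℤ`). There the Jacobi identity on basis vectors is a polynomial
identity in the indices, with no boundary cases. The given algebra embeds in it: the only
generators outside the range `m ≥ -1`, `n ≥ 0` that the brackets produce are `L_{-2}` in
`[L_{-1}, L_{-1}]` and `W_{-1}` in `[L_{-1}, W_0]`, and their coefficients `m - n` and
`(a - 1)(m + 1) - n` vanish there. -/

noncomputable section

/-- Index set of the annihilation algebra `Lie(W(a,b))⁺`:
`L_m` for `m ≥ -1` and `W_n` for `n ≥ 0`. -/
abbrev WIdx : Type := {m : ℤ // -1 ≤ m} ⊕ {n : ℤ // 0 ≤ n}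

/-- The underlying vector space, with basis `{L_m : m ≥ -1} ∪ {W_n : n ≥ 0}`. -/
abbrev WSp : Type := WIdx →₀ ℂ

/-- The basis vector `L_m` (interpreted as `0` when `m < -1`). -/
def Lgen (m : ℤ) : WSp := if h : -1 ≤ m then Finsupp.single (Sum.inl ⟨m, h⟩) 1 else 0

/-- The basis vector `W_n` (interpreted as `0` when `n < 0`). -/
def Wgen (n : ℤ) : WSp := if h : 0 ≤ n then Finsupp.single (Sum.inr ⟨n, h⟩) 1 else 0

/-- The bracket on basis elements:
`[L_m, L_n] = (m−n)L_{m+n}`,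
`[L_m, W_n] = ((a−1)(m+1) − n)W_{m+n} + b·W_{m+n+1}`,
`[W_m, W_n] = 0`, out-of-range generators being `0`. -/
def brW (a b : ℂ) : WIdx → WIdx → WSp
  | Sum.inl m, Sum.inl n => (((m.1 : ℂ) - (n.1 : ℂ))) • Lgen (m.1 + n.1)
  | Sum.inl m, Sum.inr n =>
      ((a - 1) * ((m.1 : ℂ) + 1) - (n.1 : ℂ)) • Wgen (m.1 + n.1) + b • Wgen (m.1 + n.1 + 1)
  | Sum.inr n, Sum.inl m =>
      -(((a - 1) * ((m.1 : ℂ) + 1) - (n.1 : ℂ)) • Wgen (m.1 + n.1) + b • Wgen (m.1 + n.1 + 1))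
  | Sum.inr _, Sum.inr _ => 0

/-- The bilinear extension of the bracket to the whole space. -/
def bracketW (a b : ℂ) (x y : WSp) : WSp :=
  x.sum fun i c => y.sum fun j d => (c * d) • brW a b i j

namespace Finsupp

variable {R M ι κ : Type*} [CommSemiring R] [AddCommMonoid M] [Module R M]

def linearCombination₂ (f : ι → κ → M) : (ι →₀ R) →ₗ[R] (κ →₀ R) →ₗ[R] M :=
  linearCombination R fun i => linearCombination R (f i)

theorem linearCombination₂_apply (f : ι → κ → M) (x : ι →₀ R) (y : κ →₀ R) :
    linearCombination₂ f x y = x.sum fun i c => y.sum fun j d => (c * d) • f i j := by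
  simp [linearCombination₂, linearCombination_apply, LinearMap.sum_apply,
    Finsupp.sum, Finset.smul_sum, smul_smul]

@[simp]
theorem linearCombination₂_single_single (f : ι → κ → M) (i : ι) (j : κ) (c d : R) :
    linearCombination₂ f (single i c) (single j d) = (c * d) • f i j := by
  simp [linearCombination₂, smul_smul]

end Finsupp

theorem bracketW_eq_linearCombination₂ (a b : ℂ) (x y : WSp) :
    bracketW a b x y = Finsupp.linearCombination₂ (brW a b) x y :=
  (Finsupp.linearCombination₂_apply _ x y).symm

section Leibniz

variable {R ι : Type*} [CommRing R]

theorem leibniz_of_single (B : (ι →₀ R) →ₗ[R] (ι →₀ R) →ₗ[R] (ι →₀ R))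
    (h : ∀ i j k, B (.single i 1) (B (.single j 1) (.single k 1)) =
      B (B (.single i 1) (.single j 1)) (.single k 1) +
        B (.single j 1) (B (.single i 1) (.single k 1)))
    (x y z : ι →₀ R) : B x (B y z) = B (B x y) z + B y (B x z) := by
  induction x using Finsupp.induction_linear with
  | zero => simp
  | add x x' hx hx' => simp only [map_add, LinearMap.add_apply, hx, hx']; abel
  | single i c =>
    induction y using Finsupp.induction_linear with
    | zero => simp
    | add y y' hy hy' => simp only [map_add, LinearMap.add_apply, hy, hy']; abel
    | single j d =>
      induction z using Finsupp.induction_linear with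
      | zero => simp
      | add z z' hz hz' => simp only [map_add, hz, hz']; abel
      | single k e =>
        rw [← Finsupp.smul_single_one i c, ← Finsupp.smul_single_one j d,
          ← Finsupp.smul_single_one k e]
        simp only [map_smul, LinearMap.smul_apply]
        rw [h]
        module

end Leibniz

abbrev WSpℤ : Type := ℤ ⊕ ℤ →₀ ℂ

abbrev Lℤ (m : ℤ) : WSpℤ := Finsupp.single (Sum.inl m) 1

abbrev Wℤ (n : ℤ) : WSpℤ := Finsupp.single (Sum.inr n) 1

def brℤ (a b : ℂ) : ℤ ⊕ ℤ → ℤ ⊕ ℤ → WSpℤ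
  | Sum.inl m, Sum.inl n => ((m : ℂ) - n) • Lℤ (m + n)
  | Sum.inl m, Sum.inr n => ((a - 1) * (m + 1) - n) • Wℤ (m + n) + b • Wℤ (m + n + 1)
  | Sum.inr n, Sum.inl m => -(((a - 1) * (m + 1) - n) • Wℤ (m + n) + b • Wℤ (m + n + 1))
  | Sum.inr _, Sum.inr _ => 0

def bracketℤ (a b : ℂ) : WSpℤ →ₗ[ℂ] WSpℤ →ₗ[ℂ] WSpℤ := Finsupp.linearCombination₂ (brℤ a b)

section bracketℤ

variable (a b : ℂ) (m n : ℤ)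

@[simp]
theorem bracketℤ_L_L : bracketℤ a b (Lℤ m) (Lℤ n) = ((m : ℂ) - n) • Lℤ (m + n) := by
  simp [bracketℤ, brℤ]

@[simp]
theorem bracketℤ_L_W : bracketℤ a b (Lℤ m) (Wℤ n) =
    ((a - 1) * (m + 1) - n) • Wℤ (m + n) + b • Wℤ (m + n + 1) := by
  simp [bracketℤ, brℤ]

@[simp]
theorem bracketℤ_W_L : bracketℤ a b (Wℤ n) (Lℤ m) =
    -(((a - 1) * (m + 1) - n) • Wℤ (m + n) + b • Wℤ (m + n + 1)) := by
  simp [bracketℤ, brℤ]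

@[simp]
theorem bracketℤ_W_W : bracketℤ a b (Wℤ m) (Wℤ n) = 0 := by
  simp [bracketℤ, brℤ]

end bracketℤ

theorem bracketℤ_leibniz (a b : ℂ) (x y z : WSpℤ) :
    bracketℤ a b x (bracketℤ a b y z) =
      bracketℤ a b (bracketℤ a b x y) z + bracketℤ a b y (bracketℤ a b x z) := by
  refine leibniz_of_single _ (fun i j k => ?_) x y z
  rcases i with m | m <;> rcases j with n | n <;> rcases k with p | p <;>
    simp only [bracketℤ_L_L, bracketℤ_L_W, bracketℤ_W_L, bracketℤ_W_W, map_add, map_smul, map_neg,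
      map_zero, LinearMap.add_apply, LinearMap.smul_apply, LinearMap.neg_apply, LinearMap.zero_apply,
      smul_zero, smul_neg, neg_zero, add_zero, Int.cast_add, Int.cast_one] <;>
    ring_nf <;> module

def embedℤ : WSp →ₗ[ℂ] WSpℤ := Finsupp.lmapDomain ℂ ℂ (Sum.map Subtype.val Subtype.val)

theorem embedℤ_injective : Function.Injective embedℤ :=
  Finsupp.mapDomain_injective (Sum.map_injective.2 ⟨Subtype.val_injective, Subtype.val_injective⟩)

theorem embedℤ_single (i : WIdx) (c : ℂ) :
    embedℤ (Finsupp.single i c) = Finsupp.single (Sum.map Subtype.val Subtype.val i) c :=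
  Finsupp.mapDomain_single

theorem embedℤ_Lgen {m : ℤ} (hm : -1 ≤ m) : embedℤ (Lgen m) = Lℤ m := by
  rw [Lgen, dif_pos hm, embedℤ_single, Sum.map_inl]

theorem embedℤ_Wgen {n : ℤ} (hn : 0 ≤ n) : embedℤ (Wgen n) = Wℤ n := by
  rw [Wgen, dif_pos hn, embedℤ_single, Sum.map_inr]

theorem embedℤ_brW (a b : ℂ) (i j : WIdx) :
    embedℤ (brW a b i j) = brℤ a b (Sum.map Subtype.val Subtype.val i)
      (Sum.map Subtype.val Subtype.val j) := by
  rcases i with ⟨m, hm⟩ | ⟨m, hm⟩ <;> rcases j with ⟨n, hn⟩ | ⟨n, hn⟩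
  · by_cases h : -1 ≤ m + n
    · simp [brW, brℤ, embedℤ_Lgen h]
    · obtain ⟨rfl, rfl⟩ : m = -1 ∧ n = -1 := by omega
      simp [brW, brℤ]
  · by_cases h : 0 ≤ m + n
    · simp [brW, brℤ, embedℤ_Wgen h, embedℤ_Wgen (by omega : 0 ≤ m + n + 1)]
    · obtain ⟨rfl, rfl⟩ : m = -1 ∧ n = 0 := by omega
      simp [brW, brℤ, embedℤ_Wgen le_rfl]
  · by_cases h : 0 ≤ n + m
    · simp [brW, brℤ, embedℤ_Wgen h, embedℤ_Wgen (by omega : 0 ≤ n + m + 1)]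
    · obtain ⟨rfl, rfl⟩ : n = -1 ∧ m = 0 := by omega
      simp [brW, brℤ, embedℤ_Wgen le_rfl]
  · simp [brW, brℤ]

theorem embedℤ_bracketW (a b : ℂ) (x y : WSp) :
    embedℤ (bracketW a b x y) = bracketℤ a b (embedℤ x) (embedℤ y) := by
  rw [bracketW_eq_linearCombination₂]
  refine LinearMap.congr_fun₂ (f := (Finsupp.linearCombination₂ (brW a b)).compr₂ embedℤ)
    (g := (bracketℤ a b).compl₁₂ embedℤ embedℤ) ?_ x y
  ext i j : 4
  simp [embedℤ_brW, bracketℤ, embedℤ_single]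

/-- the brackets of the annihilation algebra of `W(a,b)`
satisfy the Jacobi identity (in Leibniz form). -/
theorem stmt3 (a b : ℂ) (x y z : WSp) :
    bracketW a b x (bracketW a b y z) =
      bracketW a b (bracketW a b x y) z + bracketW a b y (bracketW a b x z) := by
  apply embedℤ_injective
  simp only [map_add, embedℤ_bracketW]
  exact bracketℤ_leibniz a b _ _ _

end
end

section
/- If a ≠ 0 and a ≠ 1, then the derived subalgebra [L_W(a,b)_0, L_W(a,b)_0] equals ℂW_0 + L_W(a,b)_1, where L_W(a,b)_n = span{L_i, W_i : i ≥ n}. -/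
/-- If `a ≠ 0` and `a ≠ 1`, then the derived subalgebra
`[L_W(a,b)_0, L_W(a,b)_0]` equals `ℂW_0 + L_W(a,b)_1`, where
`L_W(a,b)_n = span{L_i, W_i : i ≥ n}`. -/
theorem stmt6 (a b : ℂ) (ha0 : a ≠ 0) (ha1 : a ≠ 1)
    (g : Type) [LieRing g] [LieAlgebra ℂ g]
    (L W : ℤ → g)
    (hLL : ∀ m n : ℤ, 0 ≤ m → 0 ≤ n →
      ⁅L m, L n⁆ = (((m : ℂ) - (n : ℂ))) • L (m + n))
    (hLW : ∀ m n : ℤ, 0 ≤ m → 0 ≤ n →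
      ⁅L m, W n⁆ = ((a - 1) * ((m : ℂ) + 1) - (n : ℂ)) • W (m + n) + b • W (m + n + 1))
    (hWW : ∀ m n : ℤ, 0 ≤ m → 0 ≤ n → ⁅W m, W n⁆ = 0)
    (F : ℤ → Submodule ℂ g)
    (hF : ∀ n : ℤ, F n = Submodule.span ℂ ((L '' {i | n ≤ i}) ∪ (W '' {i | n ≤ i}))) :
    Submodule.span ℂ {z : g | ∃ x ∈ F 0, ∃ y ∈ F 0, z = ⁅x, y⁆} =
      Submodule.span ℂ {W 0} ⊔ F 1 := by
  set S : Set g := (L '' {i | (0:ℤ) ≤ i}) ∪ (W '' {i | (0:ℤ) ≤ i}) with hS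
  set P : Submodule ℂ g := Submodule.span ℂ {W 0} ⊔ F 1 with hP
  set D : Submodule ℂ g :=
    Submodule.span ℂ {z : g | ∃ x ∈ F 0, ∃ y ∈ F 0, z = ⁅x, y⁆} with hDdef
  have hLmem : ∀ i : ℤ, 0 ≤ i → L i ∈ F 0 := fun i hi => by
    rw [hF]; exact Submodule.subset_span (Or.inl ⟨i, hi, rfl⟩)
  have hWmem : ∀ i : ℤ, 0 ≤ i → W i ∈ F 0 := fun i hi => by
    rw [hF]; exact Submodule.subset_span (Or.inr ⟨i, hi, rfl⟩)
  have hbr : ∀ x ∈ F 0, ∀ y ∈ F 0, ⁅x, y⁆ ∈ D := fun x hx y hy =>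
    Submodule.subset_span ⟨x, hx, y, hy, rfl⟩
  -- membership of generators of P in F 1
  have hL1 : ∀ i : ℤ, 1 ≤ i → L i ∈ F 1 := fun i hi => by
    rw [hF]; exact Submodule.subset_span (Or.inl ⟨i, hi, rfl⟩)
  have hW1 : ∀ i : ℤ, 1 ≤ i → W i ∈ F 1 := fun i hi => by
    rw [hF]; exact Submodule.subset_span (Or.inr ⟨i, hi, rfl⟩)
  have hW0P : W 0 ∈ P := le_sup_left (α := Submodule ℂ g)
    (Submodule.mem_span_singleton_self _)
  have hF1P : F 1 ≤ P := le_sup_right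
  -- W n in P for n ≥ 0
  have hWnP : ∀ n : ℤ, 0 ≤ n → W n ∈ P := fun n hn => by
    rcases eq_or_lt_of_le hn with h | h
    · rw [← h]; exact hW0P
    · exact hF1P (hW1 n h)
  have hLnP : ∀ n : ℤ, 1 ≤ n → L n ∈ P := fun n hn => hF1P (hL1 n hn)
  apply le_antisymm
  · -- brackets land in P
    rw [hDdef, Submodule.span_le]
    rintro z ⟨x, hx, y, hy, rfl⟩
    rw [hF] at hx hy
    clear hDdef hbr D
    induction hx, hy using Submodule.span_induction₂ with
    | mem_mem u v hu hv =>
      have key : ∀ (m n : ℤ), 0 ≤ m → 0 ≤ n → ⁅L m, W n⁆ ∈ P := by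
        intro m n hm hn
        rw [hLW m n hm hn]
        exact add_mem (Submodule.smul_mem _ _ (hWnP _ (by linarith)))
          (Submodule.smul_mem _ _ (hWnP _ (by linarith)))
      rcases hu with ⟨m, hm, rfl⟩ | ⟨m, hm, rfl⟩ <;>
        rcases hv with ⟨n, hn, rfl⟩ | ⟨n, hn, rfl⟩ <;>
        simp only [Set.mem_setOf_eq] at hm hn
      · rw [hLL m n hm hn]
        rcases eq_or_ne m n with h | h
        · subst h; simp
        · refine Submodule.smul_mem _ _ (hLnP _ ?_)
          rcases lt_or_gt_of_ne h with h' | h' <;> linarith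
      · exact key m n hm hn
      · rw [← lie_skew]; exact neg_mem (key n m hn hm)
      · rw [hWW m n hm hn]; exact zero_mem _
    | zero_left y hy => simp
    | zero_right x hx => simp
    | add_left x y z hx hy hz h1 h2 => rw [add_lie]; exact add_mem h1 h2
    | add_right x y z hx hy hz h1 h2 => rw [lie_add]; exact add_mem h1 h2
    | smul_left r x y hx hy h => rw [smul_lie]; exact Submodule.smul_mem _ _ h
    | smul_right r x y hx hy h => rw [lie_smul]; exact Submodule.smul_mem _ _ h
  · -- P ≤ D
    -- first: W n ∈ D for n ≥ 1
    have hWD : ∀ n : ℤ, 1 ≤ n → W n ∈ D := by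
      intro n hn
      have h1 : ⁅L 1, W (n - 1)⁆ ∈ D := hbr _ (hLmem 1 (by norm_num)) _
        (hWmem (n - 1) (by linarith))
      have h0 : ⁅L 0, W n⁆ ∈ D := hbr _ (hLmem 0 le_rfl) _ (hWmem n (by linarith))
      have hcomb : a • W n = ⁅L 1, W (n - 1)⁆ - ⁅L 0, W n⁆ := by
        rw [hLW 1 (n - 1) (by norm_num) (by linarith),
          hLW 0 n le_rfl (by linarith)]
        have e1 : (1 : ℤ) + (n - 1) = n := by ring
        have e3 : (0 : ℤ) + n = n := by ring
        rw [e1, e3, add_sub_add_right_eq_sub, ← sub_smul]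
        congr 1
        push_cast
        ring
      have : a • W n ∈ D := by rw [hcomb]; exact sub_mem h1 h0
      have := Submodule.smul_mem D a⁻¹ this
      rwa [smul_smul, inv_mul_cancel₀ ha0, one_smul] at this
    have hW0D : W 0 ∈ D := by
      have h0 : ⁅L 0, W 0⁆ ∈ D := hbr _ (hLmem 0 le_rfl) _ (hWmem 0 le_rfl)
      have hcomb : (a - 1) • W 0 = ⁅L 0, W 0⁆ - b • W 1 := by
        rw [hLW 0 0 le_rfl le_rfl]
        norm_num
      have : (a - 1) • W 0 ∈ D := by
        rw [hcomb]
        exact sub_mem h0 (Submodule.smul_mem _ _ (hWD 1 le_rfl))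
      have := Submodule.smul_mem D (a - 1)⁻¹ this
      rwa [smul_smul, inv_mul_cancel₀ (sub_ne_zero.mpr ha1), one_smul] at this
    have hLD : ∀ n : ℤ, 1 ≤ n → L n ∈ D := by
      intro n hn
      have h0 : ⁅L 0, L n⁆ ∈ D := hbr _ (hLmem 0 le_rfl) _ (hLmem n (by linarith))
      have hcomb : ⁅L 0, L n⁆ = (-(n : ℂ)) • L n := by
        rw [hLL 0 n le_rfl (by linarith)]
        norm_num
      rw [hcomb] at h0
      have := Submodule.smul_mem D (-(n : ℂ))⁻¹ h0
      rwa [smul_smul, inv_mul_cancel₀ (by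
        simp only [ne_eq, neg_eq_zero, Int.cast_eq_zero]
        intro h; omega), one_smul] at this
    refine sup_le ?_ ?_
    · rw [Submodule.span_le, Set.singleton_subset_iff]; exact hW0D
    · rw [hF, Submodule.span_le]
      rintro z (⟨i, hi, rfl⟩ | ⟨i, hi, rfl⟩)
      · exact hLD i hi
      · exact hWD i hi
end

section
/- If a = 1, then the derived subalgebra [L_W(1,b)_0, L_W(1,b)_0] equals L_W(1,b)_1 = span{L_i, W_i : i ≥ 1}. -/
/-- If `a = 1`, then the derived subalgebra
`[L_W(1,b)_0, L_W(1,b)_0]` equals `L_W(1,b)_1 = span{L_i, W_i : i ≥ 1}`. -/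
theorem stmt7 (b : ℂ)
    (g : Type) [LieRing g] [LieAlgebra ℂ g]
    (L W : ℤ → g)
    (hLL : ∀ m n : ℤ, 0 ≤ m → 0 ≤ n →
      ⁅L m, L n⁆ = (((m : ℂ) - (n : ℂ))) • L (m + n))
    (hLW : ∀ m n : ℤ, 0 ≤ m → 0 ≤ n →
      ⁅L m, W n⁆ = (-(n : ℂ)) • W (m + n) + b • W (m + n + 1))
    (hWW : ∀ m n : ℤ, 0 ≤ m → 0 ≤ n → ⁅W m, W n⁆ = 0)
    (F : ℤ → Submodule ℂ g)
    (hF : ∀ n : ℤ, F n = Submodule.span ℂ ((L '' {i | n ≤ i}) ∪ (W '' {i | n ≤ i}))) :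
    Submodule.span ℂ {z : g | ∃ x ∈ F 0, ∃ y ∈ F 0, z = ⁅x, y⁆} = F 1 := by
  set S : Set g := {z : g | ∃ x ∈ F 0, ∃ y ∈ F 0, z = ⁅x, y⁆} with hS
  -- membership of generators in F 0
  have hLmem : ∀ m : ℤ, 0 ≤ m → L m ∈ F 0 := by
    intro m hm
    rw [hF 0]
    exact Submodule.subset_span (Or.inl ⟨m, hm, rfl⟩)
  have hWmem : ∀ m : ℤ, 0 ≤ m → W m ∈ F 0 := by
    intro m hm
    rw [hF 0]
    exact Submodule.subset_span (Or.inr ⟨m, hm, rfl⟩)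
  have hL1 : ∀ m : ℤ, 1 ≤ m → L m ∈ F 1 := by
    intro m hm
    rw [hF 1]
    exact Submodule.subset_span (Or.inl ⟨m, hm, rfl⟩)
  have hW1 : ∀ m : ℤ, 1 ≤ m → W m ∈ F 1 := by
    intro m hm
    rw [hF 1]
    exact Submodule.subset_span (Or.inr ⟨m, hm, rfl⟩)
  apply le_antisymm
  · -- brackets of elements of F 0 lie in F 1
    rw [Submodule.span_le]
    rintro z ⟨x, hx, y, hy, rfl⟩
    rw [hF 0] at hx hy
    clear hS
    induction hx using Submodule.span_induction with
    | mem u hu =>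
      induction hy using Submodule.span_induction with
      | mem v hv =>
        rcases hu with ⟨m, hm, rfl⟩ | ⟨m, hm, rfl⟩ <;>
          rcases hv with ⟨n, hn, rfl⟩ | ⟨n, hn, rfl⟩ <;>
          simp only [Set.mem_setOf_eq] at hm hn
        · rw [hLL m n hm hn]
          rcases lt_or_eq_of_le (add_nonneg hm hn) with h | h
          · exact Submodule.smul_mem _ _ (hL1 _ h)
          · have hm0 : m = 0 := by omega
            have hn0 : n = 0 := by omega
            subst hm0; subst hn0
            simp
        · rw [hLW m n hm hn]
          rcases lt_or_eq_of_le (add_nonneg hm hn) with h | h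
          · exact Submodule.add_mem _ (Submodule.smul_mem _ _ (hW1 _ h))
              (Submodule.smul_mem _ _ (hW1 _ (by omega)))
          · have hn0 : n = 0 := by omega
            subst hn0
            simpa using Submodule.smul_mem _ b (hW1 _ (by omega))
        · have : ⁅W m, L n⁆ = -⁅L n, W m⁆ := by rw [← lie_skew]
          rw [this, hLW n m hn hm]
          rcases lt_or_eq_of_le (add_nonneg hn hm) with h | h
          · exact Submodule.neg_mem _ (Submodule.add_mem _
              (Submodule.smul_mem _ _ (hW1 _ h))
              (Submodule.smul_mem _ _ (hW1 _ (by omega))))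
          · have hm0 : m = 0 := by omega
            subst hm0
            simpa using Submodule.neg_mem _ (Submodule.smul_mem _ b (hW1 _ (by omega)))
        · rw [hWW m n hm hn]; exact Submodule.zero_mem _
      | zero => rw [lie_zero]; exact Submodule.zero_mem _
      | add v w _ _ hv hw => rw [lie_add]; exact Submodule.add_mem _ hv hw
      | smul c v _ hv => rw [lie_smul]; exact Submodule.smul_mem _ _ hv
    | zero => rw [zero_lie]; exact Submodule.zero_mem _
    | add u v _ _ hu hv => rw [add_lie]; exact Submodule.add_mem _ hu hv
    | smul c u _ hu => rw [smul_lie]; exact Submodule.smul_mem _ _ hu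
  · -- generators of F 1 are in the span of brackets
    rw [hF 1, Submodule.span_le]
    rintro z (⟨n, hn, rfl⟩ | ⟨n, hn, rfl⟩) <;>
      simp only [Set.mem_setOf_eq] at hn
    · -- L n = (-n)⁻¹ • ⁅L 0, L n⁆
      have hb : (⁅L 0, L n⁆ : g) ∈ Submodule.span ℂ S :=
        Submodule.subset_span ⟨L 0, hLmem 0 le_rfl, L n, hLmem n (by omega), rfl⟩
      have heq : ⁅L 0, L n⁆ = (-(n : ℂ)) • L n := by
        rw [hLL 0 n le_rfl (by omega)]; norm_num
      have hne : (-(n : ℂ)) ≠ 0 := by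
        simp only [ne_eq, neg_eq_zero, Int.cast_eq_zero]; omega
      have : L n = (-(n : ℂ))⁻¹ • ⁅L 0, L n⁆ := by
        rw [heq, smul_smul, inv_mul_cancel₀ hne, one_smul]
      rw [this]
      exact Submodule.smul_mem _ _ hb
    · -- W n = ⁅L 1, W (n-1)⁆ - ⁅L 0, W n⁆
      have hb1 : (⁅L 1, W (n - 1)⁆ : g) ∈ Submodule.span ℂ S :=
        Submodule.subset_span ⟨L 1, hLmem 1 (by omega), W (n - 1), hWmem _ (by omega), rfl⟩
      have hb2 : (⁅L 0, W n⁆ : g) ∈ Submodule.span ℂ S :=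
        Submodule.subset_span ⟨L 0, hLmem 0 le_rfl, W n, hWmem n (by omega), rfl⟩
      have h1 : ⁅L 1, W (n - 1)⁆ = (-((n : ℂ) - 1)) • W n + b • W (n + 1) := by
        have := hLW 1 (n - 1) (by omega) (by omega)
        rw [this]
        push_cast
        norm_num [show 1 + (n - 1) = n by ring, show 1 + (n - 1) + 1 = n + 1 by ring]
      have h2 : ⁅L 0, W n⁆ = (-(n : ℂ)) • W n + b • W (n + 1) := by
        rw [hLW 0 n le_rfl (by omega)]; norm_num
      have : W n = ⁅L 1, W (n - 1)⁆ - ⁅L 0, W n⁆ := by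
        rw [h1, h2]; module
      rw [this]
      exact Submodule.sub_mem _ hb1 hb2
end

section
/- For any a, b ∈ ℂ and any fixed N ∈ ℤ≥0, the quotient Lie algebra L_W(a,b)_0 / L_W(a,b)_N is a finite-dimensional solvable Lie algebra. More precisely, the (n+1)-st derived subalgebra of L_W(a,b)_0 is contained in L_W(a,b)_n for all n ≥ 0. -/
private lemma aux_span_bracket {g : Type} [LieRing g] [LieAlgebra ℂ g]
    (s t : Set g) (P : Submodule ℂ g)
    (h : ∀ x ∈ s, ∀ y ∈ t, ⁅x, y⁆ ∈ P) :
    ∀ x ∈ Submodule.span ℂ s, ∀ y ∈ Submodule.span ℂ t, ⁅x, y⁆ ∈ P := by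
  have h1 : ∀ x ∈ s, ∀ y ∈ Submodule.span ℂ t, ⁅x, y⁆ ∈ P := by
    intro x hx y hy
    induction hy using Submodule.span_induction with
    | mem z hz => exact h x hx z hz
    | zero => rw [lie_zero]; exact P.zero_mem
    | add u v _ _ hu hv => rw [lie_add]; exact P.add_mem hu hv
    | smul c u _ hu => rw [lie_smul]; exact P.smul_mem c hu
  intro x hx y hy
  induction hx using Submodule.span_induction with
  | mem z hz => exact h1 z hz y hy
  | zero => rw [zero_lie]; exact P.zero_mem
  | add u v _ _ hu hv => rw [add_lie]; exact P.add_mem hu hv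
  | smul c u _ hu => rw [smul_lie]; exact P.smul_mem c hu

/-- For any `a, b ∈ ℂ` and any `N ≥ 0`, the quotient
`L_W(a,b)_0 / L_W(a,b)_N` is a finite-dimensional solvable Lie algebra;
more precisely, the `(n+1)`-st derived subalgebra of `L_W(a,b)_0` is contained
in `L_W(a,b)_n` for all `n ≥ 0`.  Here `L_W(a,b)_n = span{L_i, W_i : i ≥ n}`,
finite dimensionality of the quotient being expressed by `F 0` lying in the sum
of a finite-dimensional subspace and `F N`, and solvability of the quotient by
the derived series eventually landing in `F N`. -/
theorem stmt8 (a b : ℂ)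
    (g : Type) [LieRing g] [LieAlgebra ℂ g]
    (L W : ℤ → g)
    (hLL : ∀ m n : ℤ, 0 ≤ m → 0 ≤ n →
      ⁅L m, L n⁆ = (((m : ℂ) - (n : ℂ))) • L (m + n))
    (hLW : ∀ m n : ℤ, 0 ≤ m → 0 ≤ n →
      ⁅L m, W n⁆ = ((a - 1) * ((m : ℂ) + 1) - (n : ℂ)) • W (m + n) + b • W (m + n + 1))
    (hWW : ∀ m n : ℤ, 0 ≤ m → 0 ≤ n → ⁅W m, W n⁆ = 0)
    (F : ℤ → Submodule ℂ g)
    (hF : ∀ n : ℤ, F n = Submodule.span ℂ ((L '' {i | n ≤ i}) ∪ (W '' {i | n ≤ i})))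
    (Dser : ℕ → Submodule ℂ g)
    (hD0 : Dser 0 = F 0)
    (hDs : ∀ k : ℕ, Dser (k + 1) =
      Submodule.span ℂ {z : g | ∃ x ∈ Dser k, ∃ y ∈ Dser k, z = ⁅x, y⁆}) :
    (∀ n : ℕ, Dser (n + 1) ≤ F (n : ℤ)) ∧
    (∀ N : ℕ, (∃ k : ℕ, Dser k ≤ F (N : ℤ)) ∧
      (∃ S : Finset g, F 0 ≤ Submodule.span ℂ (S : Set g) ⊔ F (N : ℤ))) := by
  classical
  -- the auxiliary filtration with a shifted L-part
  set Hs : ℤ → Set g := fun n => (L '' {i | n + 1 ≤ i}) ∪ (W '' {i | n ≤ i}) with hHs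
  set Gs : ℤ → Submodule ℂ g := fun n => Submodule.span ℂ (Hs n) with hGs
  have hGF : ∀ n : ℤ, Gs n ≤ F n := by
    intro n
    rw [hF n]
    apply Submodule.span_mono
    apply Set.union_subset_union_left
    apply Set.image_mono
    intro i hi
    simp only [Set.mem_setOf_eq] at hi ⊢
    omega
  -- brackets of generators of F 0 land in Gs 0
  have key0 : ∀ x ∈ (L '' {i | (0:ℤ) ≤ i}) ∪ (W '' {i | (0:ℤ) ≤ i}),
      ∀ y ∈ (L '' {i | (0:ℤ) ≤ i}) ∪ (W '' {i | (0:ℤ) ≤ i}), ⁅x, y⁆ ∈ Gs 0 := by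
    rintro x (⟨i, hi, rfl⟩ | ⟨i, hi, rfl⟩) y (⟨j, hj, rfl⟩ | ⟨j, hj, rfl⟩) <;>
      simp only [Set.mem_setOf_eq] at hi hj
    · rw [hLL i j hi hj]
      by_cases hij : i = j
      · subst hij; simp
      · exact Submodule.smul_mem _ _ (Submodule.subset_span
          (Or.inl ⟨i + j, by simp only [Set.mem_setOf_eq]; omega, rfl⟩))
    · rw [hLW i j hi hj]
      exact Submodule.add_mem _
        (Submodule.smul_mem _ _ (Submodule.subset_span
          (Or.inr ⟨i + j, by simp only [Set.mem_setOf_eq]; omega, rfl⟩)))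
        (Submodule.smul_mem _ _ (Submodule.subset_span
          (Or.inr ⟨i + j + 1, by simp only [Set.mem_setOf_eq]; omega, rfl⟩)))
    · rw [← lie_skew, hLW j i hj hi]
      refine Submodule.neg_mem _ (Submodule.add_mem _
        (Submodule.smul_mem _ _ (Submodule.subset_span
          (Or.inr ⟨j + i, by simp only [Set.mem_setOf_eq]; omega, rfl⟩)))
        (Submodule.smul_mem _ _ (Submodule.subset_span
          (Or.inr ⟨j + i + 1, by simp only [Set.mem_setOf_eq]; omega, rfl⟩))))
    · rw [hWW i j hi hj]; exact Submodule.zero_mem _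
  -- brackets of generators of Gs n land in Gs (n+1)
  have keyG : ∀ n : ℤ, 0 ≤ n → ∀ x ∈ Hs n, ∀ y ∈ Hs n, ⁅x, y⁆ ∈ Gs (n + 1) := by
    intro n hn
    rintro x (⟨i, hi, rfl⟩ | ⟨i, hi, rfl⟩) y (⟨j, hj, rfl⟩ | ⟨j, hj, rfl⟩) <;>
      simp only [Set.mem_setOf_eq] at hi hj
    · rw [hLL i j (by omega) (by omega)]
      exact Submodule.smul_mem _ _ (Submodule.subset_span
        (Or.inl ⟨i + j, by simp only [Set.mem_setOf_eq]; omega, rfl⟩))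
    · rw [hLW i j (by omega) (by omega)]
      exact Submodule.add_mem _
        (Submodule.smul_mem _ _ (Submodule.subset_span
          (Or.inr ⟨i + j, by simp only [Set.mem_setOf_eq]; omega, rfl⟩)))
        (Submodule.smul_mem _ _ (Submodule.subset_span
          (Or.inr ⟨i + j + 1, by simp only [Set.mem_setOf_eq]; omega, rfl⟩)))
    · rw [← lie_skew, hLW j i (by omega) (by omega)]
      refine Submodule.neg_mem _ (Submodule.add_mem _
        (Submodule.smul_mem _ _ (Submodule.subset_span
          (Or.inr ⟨j + i, by simp only [Set.mem_setOf_eq]; omega, rfl⟩)))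
        (Submodule.smul_mem _ _ (Submodule.subset_span
          (Or.inr ⟨j + i + 1, by simp only [Set.mem_setOf_eq]; omega, rfl⟩))))
    · rw [hWW i j (by omega) (by omega)]; exact Submodule.zero_mem _
  have main : ∀ n : ℕ, Dser (n + 1) ≤ Gs (n : ℤ) := by
    intro n
    induction n with
    | zero =>
      rw [hDs 0, hD0, hF 0]
      apply Submodule.span_le.2
      rintro z ⟨x, hx, y, hy, rfl⟩
      exact aux_span_bracket _ _ _ key0 x hx y hy
    | succ k ih =>
      rw [hDs (k + 1)]
      apply Submodule.span_le.2
      rintro z ⟨x, hx, y, hy, rfl⟩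
      have : ⁅x, y⁆ ∈ Gs ((k : ℤ) + 1) :=
        aux_span_bracket _ _ _ (keyG (k : ℤ) (by positivity)) x (ih hx) y (ih hy)
      simpa [Nat.cast_add, Nat.cast_one] using this
  have main' : ∀ n : ℕ, Dser (n + 1) ≤ F (n : ℤ) := fun n => (main n).trans (hGF _)
  refine ⟨main', fun N => ⟨⟨N + 1, (main' N).trans ?_⟩, ?_⟩⟩
  · exact le_rfl
  · refine ⟨(Finset.Icc (0:ℤ) (N:ℤ)).image L ∪ (Finset.Icc (0:ℤ) (N:ℤ)).image W, ?_⟩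
    rw [hF 0]
    apply Submodule.span_le.2
    rintro z (⟨i, hi, rfl⟩ | ⟨i, hi, rfl⟩) <;> simp only [Set.mem_setOf_eq] at hi
    · by_cases hiN : i ≤ (N : ℤ)
      · exact Submodule.mem_sup_left (Submodule.subset_span (by
          simp only [Finset.coe_union, Finset.coe_image, Set.mem_union, Set.mem_image,
            Finset.mem_coe, Finset.mem_Icc]
          exact Or.inl ⟨i, ⟨hi, hiN⟩, rfl⟩))
      · refine Submodule.mem_sup_right ?_
        rw [hF (N : ℤ)]
        exact Submodule.subset_span (Or.inl ⟨i, by simp only [Set.mem_setOf_eq]; omega, rfl⟩)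
    · by_cases hiN : i ≤ (N : ℤ)
      · exact Submodule.mem_sup_left (Submodule.subset_span (by
          simp only [Finset.coe_union, Finset.coe_image, Set.mem_union, Set.mem_image,
            Finset.mem_coe, Finset.mem_Icc]
          exact Or.inr ⟨i, ⟨hi, hiN⟩, rfl⟩))
      · refine Submodule.mem_sup_right ?_
        rw [hF (N : ℤ)]
        exact Submodule.subset_span (Or.inr ⟨i, by simp only [Set.mem_setOf_eq]; omega, rfl⟩)
end

section
/- Let a, b ∈ ℂ with (a,b) ≠ (1,0), and let M = ℂ[∂]v be the free rank-one W(a,b)-module with L_λ v = (∂ + αλ + β)v and W_λ v = 0. Then M is an irreducible W(a,b)-module if and only if α ≠ 0. -/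
open Polynomial

/-- The `λ`-action of `L` (evaluated at `λ = c`) on the rank-one module
`M_{α,β} = ℂ[∂]v` with `L_λ v = (∂ + αλ + β)v`:
`f(∂)v ↦ (∂ + αλ + β) f(∂ + λ) v`. -/
noncomputable def Lact (α β c : ℂ) (f : ℂ[X]) : ℂ[X] :=
  (X + C (α * c + β)) * f.comp (X + C c)

/-- For `(a, b) ≠ (1, 0)`, the free rank-one `W(a,b)`-module
`M_{α,β} = ℂ[∂]v` with `L_λ v = (∂+αλ+β)v`, `W_λ v = 0` is irreducible
(i.e. every `ℂ[∂]`-submodule closed under the `λ`-actions is `⊥` or `⊤`)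
if and only if `α ≠ 0`.  (`W` acts by zero, so closure under `W` is automatic.) -/
theorem stmt9 (a b : ℂ) (hab : (a, b) ≠ (1, 0)) (α β : ℂ) :
    (∀ V : Ideal ℂ[X], (∀ f ∈ V, ∀ c : ℂ, Lact α β c f ∈ V) → V = ⊥ ∨ V = ⊤) ↔
      α ≠ 0 := by
  constructor
  · intro hV hα0
    subst hα0
    have hcl : ∀ f ∈ Ideal.span ({X + C β} : Set ℂ[X]), ∀ c : ℂ,
        Lact 0 β c f ∈ Ideal.span ({X + C β} : Set ℂ[X]) := by
      intro f hf c
      rw [Ideal.mem_span_singleton]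
      unfold Lact
      rw [zero_mul, zero_add]
      exact dvd_mul_right _ _
    rcases hV _ hcl with h | h
    · rw [Ideal.span_singleton_eq_bot] at h
      exact Polynomial.X_add_C_ne_zero β h
    · rw [Ideal.span_singleton_eq_top] at h
      have := Polynomial.degree_eq_zero_of_isUnit h
      rw [Polynomial.degree_X_add_C] at this
      exact one_ne_zero this
  · intro hα V hcl
    obtain ⟨g, hg⟩ := (IsPrincipalIdealRing.principal V).principal
    by_cases hg0 : g = 0
    · left
      subst hg0
      rw [hg]
      simp
    · right
      have hu : IsUnit g := by
        by_contra hu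
        -- g has positive degree, hence a root r
        have hdeg : 0 < g.natDegree := by
          rcases Nat.eq_zero_or_pos g.natDegree with h0 | h0
          · obtain ⟨a, ha⟩ := Polynomial.natDegree_eq_zero.mp h0
            exact absurd (ha ▸ isUnit_C.mpr (IsUnit.mk0 a (by rintro rfl; simp at ha; exact hg0 ha.symm))) hu
          · exact h0
        obtain ⟨r, hr⟩ := Complex.exists_root (Polynomial.natDegree_pos_iff_degree_pos.mp hdeg)
        have key : ∀ c : ℂ, (r + (α * c + β)) * g.eval (r + c) = 0 := by
          intro c
          have hgV : g ∈ V := by rw [hg]; exact Ideal.subset_span rfl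
          have hmem := hcl g hgV c
          rw [hg, ← Ideal.span, Ideal.mem_span_singleton] at hmem
          obtain ⟨h, hh⟩ := hmem
          have := congrArg (Polynomial.eval r) hh
          simp only [Lact, eval_mul, eval_add, eval_X, eval_C, eval_comp] at this
          rw [this, hr.eq_zero, zero_mul]
        -- turn into a polynomial identity in c
        have hp : (C (r + β) + C α * X) * g.comp (C r + X) = 0 := by
          apply Polynomial.funext
          intro c
          have := key c
          simp only [eval_mul, eval_add, eval_C, eval_X, eval_comp, eval_zero]
          rw [show r + β + α * c = r + (α * c + β) by ring,
              show r + c = r + c from rfl]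
          rw [show Polynomial.eval (r + c) g = g.eval (r + c) from rfl]
          exact this
        rcases mul_eq_zero.mp hp with h1 | h2
        · have := congrArg (fun p => Polynomial.coeff p 1) h1
          simp at this
          exact hα this
        · apply hg0
          apply Polynomial.funext
          intro x
          have := congrArg (Polynomial.eval (x - r)) h2
          simp only [eval_comp, eval_add, eval_C, eval_X, eval_zero] at this
          rw [show r + (x - r) = x by ring] at this
          simpa using this
      rw [hg, ← Ideal.span, Ideal.span_singleton_eq_top]
      exact hu
end

section
/- Let M = ℂ[∂]v be the rank-one W(1,0)-module with L_λ v = (∂ + αλ + β)v and W_λ v = γ v. Then M is irreducible if and only if α ≠ 0 or γ ≠ 0. In particular, when α = 0 and γ ≠ 0, M is irreducible. -/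
open Polynomial

/-- The `λ`-action of `W` (at `λ = c`) on `M_{α,β,γ}`, `W_λ v = γv`:
`f(∂)v ↦ γ f(∂+λ) v`. -/
noncomputable def Wact (γ c : ℂ) (f : ℂ[X]) : ℂ[X] :=
  γ • f.comp (X + C c)

/-- If an ideal of `ℂ[X]` contains two polynomials with no common root,
the first nonzero, then it is the whole ring. -/
lemma key_top (V : Ideal ℂ[X]) (p q : ℂ[X]) (hp : p ∈ V) (hq : q ∈ V)
    (hp0 : p ≠ 0) (h : ∀ x : ℂ, p.eval x = 0 → q.eval x ≠ 0) : V = ⊤ := by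
  set d := EuclideanDomain.gcd p q with hd
  have hdp : d ∣ p := EuclideanDomain.gcd_dvd_left p q
  have hdq : d ∣ q := EuclideanDomain.gcd_dvd_right p q
  have hd0 : d ≠ 0 := by
    intro h0
    exact hp0 (by simpa [h0] using hdp)
  have hdu : IsUnit d := by
    by_contra hnu
    have hdeg : 0 < d.degree := by
      rcases lt_or_eq_of_le (Polynomial.zero_le_degree_iff.mpr hd0) with h1 | h1
      · exact h1
      · exact absurd (Polynomial.isUnit_iff_degree_eq_zero.mpr h1.symm) hnu
    obtain ⟨z, hz⟩ := Complex.exists_root hdeg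
    obtain ⟨e, he⟩ := hdp
    obtain ⟨e', he'⟩ := hdq
    have hpz : p.eval z = 0 := by
      rw [he, eval_mul, hz, zero_mul]
    have hqz : q.eval z = 0 := by
      rw [he', eval_mul, hz, zero_mul]
    exact h z hpz hqz
  have hdV : d ∈ V := by
    rw [hd, EuclideanDomain.gcd_eq_gcd_ab p q]
    exact V.add_mem (V.mul_mem_right _ hp) (V.mul_mem_right _ hq)
  exact V.eq_top_of_isUnit_mem hdV hdu

lemma eval_Wact (γ c : ℂ) (f : ℂ[X]) (x : ℂ) :
    (Wact γ c f).eval x = γ * f.eval (x + c) := by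
  simp [Wact, eval_comp]

lemma eval_Lact (α β c : ℂ) (f : ℂ[X]) (x : ℂ) :
    (Lact α β c f).eval x = (x + (α * c + β)) * f.eval (x + c) := by
  simp [Lact, eval_comp]

lemma irred_of (α β γ : ℂ) (h : α ≠ 0 ∨ γ ≠ 0) (V : Ideal ℂ[X])
    (hL : ∀ f ∈ V, ∀ c : ℂ, Lact α β c f ∈ V)
    (hW : ∀ f ∈ V, ∀ c : ℂ, Wact γ c f ∈ V) : V = ⊥ ∨ V = ⊤ := by
  by_cases hV : V = ⊥
  · exact Or.inl hV
  right
  obtain ⟨p, hpV, hp0⟩ := Submodule.exists_mem_ne_zero_of_ne_bot hV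
  set S : Finset ℂ := p.roots.toFinset with hS
  have hmemS : ∀ x : ℂ, p.eval x = 0 → x ∈ S := fun x hx => by
    rw [hS, Multiset.mem_toFinset, mem_roots']
    exact ⟨hp0, hx⟩
  rcases h with hα | hγ
  · -- use L-action
    set bad : Finset ℂ :=
      S.image (fun r => (-β - r) / α) ∪ (S ×ˢ S).image (fun rs => rs.1 - rs.2) with hbad
    obtain ⟨c, hc⟩ := Infinite.exists_notMem_finset bad
    refine key_top V p (Lact α β c p) hpV (hL p hpV c) hp0 ?_
    intro x hx hqx
    rw [eval_Lact] at hqx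
    rcases mul_eq_zero.mp hqx with h1 | h2
    · apply hc
      rw [hbad]
      apply Finset.mem_union_left
      apply Finset.mem_image.mpr
      refine ⟨x, hmemS x hx, ?_⟩
      field_simp
      linear_combination -h1
    · apply hc
      rw [hbad]
      apply Finset.mem_union_right
      apply Finset.mem_image.mpr
      exact ⟨(x + c, x), Finset.mem_product.mpr ⟨hmemS _ h2, hmemS _ hx⟩, by ring⟩
  · -- use W-action
    set bad : Finset ℂ := (S ×ˢ S).image (fun rs => rs.1 - rs.2) with hbad
    obtain ⟨c, hc⟩ := Infinite.exists_notMem_finset bad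
    refine key_top V p (Wact γ c p) hpV (hW p hpV c) hp0 ?_
    intro x hx hqx
    rw [eval_Wact] at hqx
    rcases mul_eq_zero.mp hqx with h1 | h2
    · exact hγ h1
    · apply hc
      rw [hbad]
      apply Finset.mem_image.mpr
      exact ⟨(x + c, x), Finset.mem_product.mpr ⟨hmemS _ h2, hmemS _ hx⟩, by ring⟩

/-- The rank-one `W(1,0)`-module `M_{α,β,γ} = ℂ[∂]v` with
`L_λ v = (∂+αλ+β)v`, `W_λ v = γv` is irreducible iff `α ≠ 0` or `γ ≠ 0`;
in particular when `α = 0` and `γ ≠ 0` it is irreducible. -/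
theorem stmt10 (α β γ : ℂ) :
    ((∀ V : Ideal ℂ[X],
        (∀ f ∈ V, ∀ c : ℂ, Lact α β c f ∈ V) →
        (∀ f ∈ V, ∀ c : ℂ, Wact γ c f ∈ V) → V = ⊥ ∨ V = ⊤) ↔
      (α ≠ 0 ∨ γ ≠ 0)) ∧
    (α = 0 → γ ≠ 0 →
      ∀ V : Ideal ℂ[X],
        (∀ f ∈ V, ∀ c : ℂ, Lact α β c f ∈ V) →
        (∀ f ∈ V, ∀ c : ℂ, Wact γ c f ∈ V) → V = ⊥ ∨ V = ⊤) := by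
  constructor
  · constructor
    · intro hirr
      by_contra hne
      push_neg at hne
      obtain ⟨hα, hγ⟩ := hne
      subst hα; subst hγ
      set V : Ideal ℂ[X] := Ideal.span {X + C β} with hV
      have hLc : ∀ f ∈ V, ∀ c : ℂ, Lact 0 β c f ∈ V := by
        intro f _ c
        rw [hV, Ideal.mem_span_singleton]
        exact ⟨f.comp (X + C c), by rw [Lact]; ring_nf⟩
      have hWc : ∀ f ∈ V, ∀ c : ℂ, Wact 0 c f ∈ V := by
        intro f _ c
        simp [Wact]
      rcases hirr V hLc hWc with hb | ht
      · have : (X + C β : ℂ[X]) ∈ V := Ideal.subset_span (Set.mem_singleton _)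
        rw [hb] at this
        have : (X + C β : ℂ[X]) = 0 := this
        exact X_add_C_ne_zero β (by simpa using this)
      · have : (1 : ℂ[X]) ∈ V := ht ▸ Submodule.mem_top
        rw [hV, Ideal.mem_span_singleton] at this
        have hdeg := Polynomial.degree_le_of_dvd this one_ne_zero
        simp [Polynomial.degree_X_add_C] at hdeg
        exact absurd hdeg (by norm_num)
    · exact fun h V hL hW => irred_of α β γ h V hL hW
  · intro hα hγ V hL hW
    exact irred_of α β γ (Or.inr hγ) V hL hW
end

section
/- Let M = ℂ[∂]v be the W(1,0)-module with L_λ v = (∂+β)v and W_λ v = 0 (the case α = γ = 0). Then (∂+β)M is a proper nonzero conformal submodule of M, and it is isomorphic as a W(1,0)-module to M_{1,β,0} (the rank-one module with L_λ v = (∂ + λ + β)v, W_λ v = 0). -/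
open Polynomial

/-- For the `W(1,0)`-module `M = M_{0,β,0} = ℂ[∂]v` with
`L_λ v = (∂+β)v`, `W_λ v = 0`, the submodule `(∂+β)M` is a proper nonzero
conformal submodule, and `f ↦ (∂+β)f` is an isomorphism of `W(1,0)`-modules
from `M_{1,β,0}` (where `L_λ v = (∂+λ+β)v`, `W_λ v = 0`) onto `(∂+β)M`:
it is an injective `ℂ[∂]`-linear map with image `(∂+β)M` intertwining the
`λ`-actions. -/
theorem stmt11 (β : ℂ) :
    (∀ f ∈ Ideal.span {X + C β}, ∀ c : ℂ, Lact 0 β c f ∈ Ideal.span ({X + C β} : Set ℂ[X])) ∧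
    Ideal.span ({X + C β} : Set ℂ[X]) ≠ ⊥ ∧
    Ideal.span ({X + C β} : Set ℂ[X]) ≠ ⊤ ∧
    Function.Injective (fun f : ℂ[X] => (X + C β) * f) ∧
    (∀ f : ℂ[X], (X + C β) * f ∈ Ideal.span ({X + C β} : Set ℂ[X])) ∧
    (∀ h ∈ Ideal.span ({X + C β} : Set ℂ[X]), ∃ f : ℂ[X], (X + C β) * f = h) ∧
    (∀ f p : ℂ[X], (X + C β) * (p * f) = p * ((X + C β) * f)) ∧
    (∀ (c : ℂ) (f : ℂ[X]), (X + C β) * Lact 1 β c f = Lact 0 β c ((X + C β) * f)) := by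
  have hne : (X + C β : ℂ[X]) ≠ 0 := X_add_C_ne_zero β
  refine ⟨?_, ?_, ?_, ?_, ?_, ?_, ?_, ?_⟩
  · intro f _ c
    rw [Ideal.mem_span_singleton]
    exact ⟨f.comp (X + C c), by simp [Lact]⟩
  · simp [Ideal.span_singleton_eq_bot, hne]
  · intro h
    rw [Ideal.span_singleton_eq_top] at h
    have := natDegree_eq_zero_of_isUnit h
    simp at this
  · intro f g h
    exact mul_left_cancel₀ hne h
  · intro f
    rw [Ideal.mem_span_singleton]
    exact ⟨f, rfl⟩
  · intro h hh
    rw [Ideal.mem_span_singleton] at hh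
    obtain ⟨f, hf⟩ := hh
    exact ⟨f, hf.symm⟩
  · intro f p; ring
  · intro c f
    simp only [Lact, mul_comp, add_comp, X_comp, C_comp, C_add, one_mul, C_0, zero_mul, mul_zero, add_zero]
    ring
end

section
/- Let M = ℂ[∂]v with W_λ v = γ v, γ ≠ 0, and suppose V is a nonzero ℂ[∂]-submodule of M closed under the action of W (i.e., f(∂)v ∈ V implies all coefficients of γ f(∂+λ)v in λ lie in V). Then V = M. -/
open Polynomial

/-- Let `M = ℂ[∂]v` with `W_λ v = γv`, `γ ≠ 0`
(so `W_λ (f(∂)v) = γ f(∂+λ) v`).  If `V` is a nonzero `ℂ[∂]`-submodule of `M`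
closed under the action of `W`, then `V = M`. -/
theorem stmt12 (γ : ℂ) (hγ : γ ≠ 0) (V : Ideal ℂ[X]) (hV : V ≠ ⊥)
    (hclosed : ∀ f ∈ V, ∀ c : ℂ, γ • f.comp (X + C c) ∈ V) :
    V = ⊤ := by
  classical
  -- V is closed under f ↦ f(X+1)
  have comp_mem : ∀ f ∈ V, f.comp (X + C 1) ∈ V := by
    intro f hf
    have h := hclosed f hf 1
    have h2 : (C γ⁻¹) * (γ • f.comp (X + C 1)) ∈ V := V.mul_mem_left _ h
    have : (C γ⁻¹) * (γ • f.comp (X + C 1)) = f.comp (X + C 1) := by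
      rw [Polynomial.smul_eq_C_mul, ← mul_assoc, ← C_mul, inv_mul_cancel₀ hγ, C_1, one_mul]
    rwa [this] at h2
  obtain ⟨f, hfV, hf0⟩ := Submodule.exists_mem_ne_zero_of_ne_bot hV
  suffices h : ∀ n : ℕ, ∀ f : ℂ[X], f ∈ V → f ≠ 0 → f.natDegree = n → V = ⊤ from
    h f.natDegree f hfV hf0 rfl
  intro n
  induction n using Nat.strong_induction_on with
  | _ n ih =>
    intro f hf hf0 hdeg
    rcases Nat.eq_zero_or_pos n with hn | hn
    · -- f is a nonzero constant, hence a unit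
      obtain ⟨a, rfl⟩ := Polynomial.natDegree_eq_zero.mp (hdeg.trans hn)
      have ha : a ≠ 0 := fun h => hf0 (by simp [h])
      exact Ideal.eq_top_of_isUnit_mem V hf (isUnit_C.mpr (isUnit_iff_ne_zero.mpr ha))
    · set g := f.comp (X + C 1) - f with hg
      have hgV : g ∈ V := V.sub_mem (comp_mem f hf) hf
      -- degree facts about f.comp (X + C 1)
      have hq1 : (X + C (1:ℂ)).natDegree = 1 := natDegree_X_add_C 1
      have hdc : (f.comp (X + C 1)).natDegree = f.natDegree := by
        rw [natDegree_comp, hq1, mul_one]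
      have hlc : (f.comp (X + C 1)).leadingCoeff = f.leadingCoeff := by
        rw [leadingCoeff_comp (by rw [hq1]; exact one_ne_zero), leadingCoeff_X_add_C, one_pow,
          mul_one]
      -- g ≠ 0
      have hg0 : g ≠ 0 := by
        intro h0
        have heq : f.comp (X + C 1) = f := by
          have := sub_eq_zero.mp h0
          exact this
        -- then f.eval (k+1) = f.eval k for all k
        have hstep : ∀ x : ℂ, f.eval (x + 1) = f.eval x := by
          intro x
          have := congrArg (fun p => p.eval x) heq
          simpa [eval_comp] using this
        have hk : ∀ k : ℕ, f.eval (k : ℂ) = f.eval 0 := by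
          intro k
          induction k with
          | zero => simp
          | succ m ihm =>
            have := hstep (m : ℂ)
            push_cast
            rw [this, ihm]
        set p := f - C (f.eval 0) with hp
        have hproots : ∀ k : ℕ, p.IsRoot (k : ℂ) := by
          intro k
          simp [hp, Polynomial.IsRoot, hk k]
        have hpinf : {x | p.IsRoot x}.Infinite :=
          Set.infinite_of_injective_forall_mem (f := (Nat.cast : ℕ → ℂ))
            Nat.cast_injective hproots
        have hp0 : p = 0 := Polynomial.eq_zero_of_infinite_isRoot p hpinf
        have : f = C (f.eval 0) := by
          have := sub_eq_zero.mp hp0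
          exact this
        have : f.natDegree = 0 := by rw [this]; exact natDegree_C _
        omega
      -- degree of g is smaller
      have hlt : g.natDegree < n := by
        have hc0 : f.comp (X + C 1) ≠ 0 := by
          intro h; rw [h] at hdc; simp at hdc; omega
        have hdeq : (f.comp (X + C 1)).degree = f.degree := by
          rw [degree_eq_natDegree hc0, degree_eq_natDegree hf0, hdc]
        have hdlt : g.degree < f.degree := by
          rw [hg, ← hdeq]
          exact Polynomial.degree_sub_lt hdeq hc0 hlc
        have := Polynomial.natDegree_lt_natDegree hg0 hdlt
        omega
      exact ih g.natDegree hlt g hgV hg0 rfl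
end

section
/- Let L(a,b)_0 be the Lie algebra spanned by {L_m, M_m : m ≥ 0} ∪ {Y_{m+1/2} : m ≥ 0} with the TSV(a,b) annihilation-algebra brackets, and let L(a,b)_n = span{L_i, M_i, Y_{i+1/2} : i ≥ n}. Then the (n+2)-nd derived subalgebra of L(a,b)_0 is contained in L(a,b)_n for all n ≥ 0; hence for any N ≥ 0 the quotient L(a,b)_0/L(a,b)_N is a finite-dimensional solvable Lie algebra. -/
lemma stmt17_span_bracket {g : Type} [LieRing g] [LieAlgebra ℂ g] {s t : Set g}
    {T : Submodule ℂ g} (h : ∀ x ∈ s, ∀ y ∈ t, ⁅x, y⁆ ∈ T) :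
    ∀ x ∈ Submodule.span ℂ s, ∀ y ∈ Submodule.span ℂ t, ⁅x, y⁆ ∈ T := by
  have key : ∀ x ∈ s, ∀ y ∈ Submodule.span ℂ t, ⁅x, y⁆ ∈ T := by
    intro x hx y hy
    induction hy using Submodule.span_induction with
    | mem z hz => exact h x hx z hz
    | zero => simp
    | add y z _ _ hy hz => rw [lie_add]; exact T.add_mem hy hz
    | smul c y _ hy => rw [lie_smul]; exact T.smul_mem c hy
  intro x hx y hy
  induction hx using Submodule.span_induction with
  | mem z hz => exact key z hz y hy
  | zero => simp
  | add u v _ _ hu hv => rw [add_lie]; exact T.add_mem hu hv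
  | smul c u _ hu => rw [smul_lie]; exact T.smul_mem c hu

theorem stmt17 (a b : ℂ)
    (g : Type) [LieRing g] [LieAlgebra ℂ g]
    (L Y Mg : ℤ → g)
    (hLL : ∀ m n : ℤ, 0 ≤ m → 0 ≤ n →
      ⁅L m, L n⁆ = (((m : ℂ) - (n : ℂ))) • L (m + n))
    (hLM : ∀ m n : ℤ, 0 ≤ m → 0 ≤ n →
      ⁅L m, Mg n⁆ = ((2 * a - 3) * ((m : ℂ) + 1) - (n : ℂ)) • Mg (m + n)
        + (2 * b) • Mg (m + n + 1))
    (hLY : ∀ m q : ℤ, 0 ≤ m → 0 ≤ q →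
      ⁅L m, Y q⁆ = ((a - 1) * ((m : ℂ) + 1) - ((q : ℂ) + 1)) • Y (m + q)
        + b • Y (m + q + 1))
    (hYY : ∀ p q : ℤ, 0 ≤ p → 0 ≤ q →
      ⁅Y p, Y q⁆ = (((p : ℂ) - (q : ℂ))) • Mg (p + q + 1))
    (hYM : ∀ p n : ℤ, 0 ≤ p → 0 ≤ n → ⁅Y p, Mg n⁆ = 0)
    (hMM : ∀ m n : ℤ, 0 ≤ m → 0 ≤ n → ⁅Mg m, Mg n⁆ = 0)
    (F : ℤ → Submodule ℂ g)
    (hF : ∀ n : ℤ, F n = Submodule.span ℂ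
      ((L '' {i | n ≤ i}) ∪ (Mg '' {i | n ≤ i}) ∪ (Y '' {i | n ≤ i})))
    (Dser : ℕ → Submodule ℂ g)
    (hD0 : Dser 0 = F 0)
    (hDs : ∀ k : ℕ, Dser (k + 1) =
      Submodule.span ℂ {z : g | ∃ x ∈ Dser k, ∃ y ∈ Dser k, z = ⁅x, y⁆}) :
    (∀ n : ℕ, Dser (n + 2) ≤ F (n : ℤ)) ∧
    (∀ N : ℕ, (∃ k : ℕ, Dser k ≤ F (N : ℤ)) ∧
      (∃ S : Finset g, F 0 ≤ Submodule.span ℂ (S : Set g) ⊔ F (N : ℤ))) := by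
  classical
  -- the auxiliary filtration
  set SU : ℤ → Set g := fun n =>
    (L '' {i | n + 1 ≤ i}) ∪ (Mg '' {i | n ≤ i}) ∪ (Y '' {i | n ≤ i}) with hSU
  set U : ℤ → Submodule ℂ g := fun n => Submodule.span ℂ (SU n) with hU
  have hLmem : ∀ n i : ℤ, n + 1 ≤ i → L i ∈ U n := fun n i hi =>
    Submodule.subset_span (Or.inl (Or.inl ⟨i, hi, rfl⟩))
  have hMmem : ∀ n i : ℤ, n ≤ i → Mg i ∈ U n := fun n i hi =>
    Submodule.subset_span (Or.inl (Or.inr ⟨i, hi, rfl⟩))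
  have hYmem : ∀ n i : ℤ, n ≤ i → Y i ∈ U n := fun n i hi =>
    Submodule.subset_span (Or.inr ⟨i, hi, rfl⟩)
  -- U m ≤ F n whenever n ≤ m
  have hUF : ∀ m n : ℤ, n ≤ m → U m ≤ F n := by
    intro m n hnm
    rw [hF n]
    apply Submodule.span_le.2
    rintro x (((⟨i, hi, rfl⟩ | ⟨i, hi, rfl⟩) | ⟨i, hi, rfl⟩)) <;>
      simp only [Set.mem_setOf_eq] at hi
    · exact Submodule.subset_span (Or.inl (Or.inl ⟨i, show n ≤ i by omega, rfl⟩))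
    · exact Submodule.subset_span (Or.inl (Or.inr ⟨i, show n ≤ i by omega, rfl⟩))
    · exact Submodule.subset_span (Or.inr ⟨i, show n ≤ i by omega, rfl⟩)
  -- brackets of generators of F 0 land in U 0
  have hbase : ∀ x ∈ ((L '' {i | (0:ℤ) ≤ i}) ∪ (Mg '' {i | (0:ℤ) ≤ i}) ∪ (Y '' {i | (0:ℤ) ≤ i})),
      ∀ y ∈ ((L '' {i | (0:ℤ) ≤ i}) ∪ (Mg '' {i | (0:ℤ) ≤ i}) ∪ (Y '' {i | (0:ℤ) ≤ i})),
      ⁅x, y⁆ ∈ U 0 := by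
    rintro x (((⟨i, hi, rfl⟩ | ⟨i, hi, rfl⟩) | ⟨i, hi, rfl⟩))
      <;> rintro y (((⟨j, hj, rfl⟩ | ⟨j, hj, rfl⟩) | ⟨j, hj, rfl⟩))
      <;> simp only [Set.mem_setOf_eq] at hi hj
    · rw [hLL i j hi hj]
      rcases eq_or_ne i j with h | h
      · simp [h]
      · exact Submodule.smul_mem _ _ (hLmem 0 (i + j) (by omega))
    · rw [hLM i j hi hj]
      exact Submodule.add_mem _ (Submodule.smul_mem _ _ (hMmem 0 _ (by omega)))
        (Submodule.smul_mem _ _ (hMmem 0 _ (by omega)))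
    · rw [hLY i j hi hj]
      exact Submodule.add_mem _ (Submodule.smul_mem _ _ (hYmem 0 _ (by omega)))
        (Submodule.smul_mem _ _ (hYmem 0 _ (by omega)))
    · rw [← lie_skew, hLM j i hj hi]
      exact Submodule.neg_mem _ (Submodule.add_mem _
        (Submodule.smul_mem _ _ (hMmem 0 _ (by omega)))
        (Submodule.smul_mem _ _ (hMmem 0 _ (by omega))))
    · rw [hMM i j hi hj]; exact Submodule.zero_mem _
    · rw [← lie_skew, hYM j i hj hi]; simp
    · rw [← lie_skew, hLY j i hj hi]
      exact Submodule.neg_mem _ (Submodule.add_mem _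
        (Submodule.smul_mem _ _ (hYmem 0 _ (by omega)))
        (Submodule.smul_mem _ _ (hYmem 0 _ (by omega))))
    · rw [hYM i j hi hj]; exact Submodule.zero_mem _
    · rw [hYY i j hi hj]
      exact Submodule.smul_mem _ _ (hMmem 0 _ (by omega))
  -- brackets of generators of U n land in U (n+1), for n ≥ 0
  have hgen : ∀ n : ℤ, 0 ≤ n → ∀ x ∈ SU n, ∀ y ∈ SU n, ⁅x, y⁆ ∈ U (n + 1) := by
    intro n hn
    rintro x (((⟨i, hi, rfl⟩ | ⟨i, hi, rfl⟩) | ⟨i, hi, rfl⟩))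
      <;> rintro y (((⟨j, hj, rfl⟩ | ⟨j, hj, rfl⟩) | ⟨j, hj, rfl⟩))
      <;> simp only [Set.mem_setOf_eq] at hi hj
    · rw [hLL i j (by omega) (by omega)]
      exact Submodule.smul_mem _ _ (hLmem _ (i + j) (by omega))
    · rw [hLM i j (by omega) (by omega)]
      exact Submodule.add_mem _ (Submodule.smul_mem _ _ (hMmem _ _ (by omega)))
        (Submodule.smul_mem _ _ (hMmem _ _ (by omega)))
    · rw [hLY i j (by omega) (by omega)]
      exact Submodule.add_mem _ (Submodule.smul_mem _ _ (hYmem _ _ (by omega)))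
        (Submodule.smul_mem _ _ (hYmem _ _ (by omega)))
    · rw [← lie_skew, hLM j i (by omega) (by omega)]
      exact Submodule.neg_mem _ (Submodule.add_mem _
        (Submodule.smul_mem _ _ (hMmem _ _ (by omega)))
        (Submodule.smul_mem _ _ (hMmem _ _ (by omega))))
    · rw [hMM i j (by omega) (by omega)]; exact Submodule.zero_mem _
    · rw [← lie_skew, hYM j i (by omega) (by omega)]; simp
    · rw [← lie_skew, hLY j i (by omega) (by omega)]
      exact Submodule.neg_mem _ (Submodule.add_mem _
        (Submodule.smul_mem _ _ (hYmem _ _ (by omega)))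
        (Submodule.smul_mem _ _ (hYmem _ _ (by omega))))
    · rw [hYM i j (by omega) (by omega)]; exact Submodule.zero_mem _
    · rw [hYY i j (by omega) (by omega)]
      exact Submodule.smul_mem _ _ (hMmem _ _ (by omega))
  -- main induction : Dser (k+1) ≤ U k
  have hmain : ∀ k : ℕ, Dser (k + 1) ≤ U (k : ℤ) := by
    intro k
    induction k with
    | zero =>
      rw [hDs 0]
      apply Submodule.span_le.2
      rintro z ⟨x, hx, y, hy, rfl⟩
      rw [hD0, hF 0] at hx hy
      exact stmt17_span_bracket hbase x hx y hy
    | succ k ih =>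
      rw [hDs (k + 1)]
      apply Submodule.span_le.2
      rintro z ⟨x, hx, y, hy, rfl⟩
      have hx' : x ∈ Submodule.span ℂ (SU (k : ℤ)) := ih hx
      have hy' : y ∈ Submodule.span ℂ (SU (k : ℤ)) := ih hy
      have := stmt17_span_bracket (hgen (k : ℤ) (by positivity)) x hx' y hy'
      simpa using this
  have part1 : ∀ n : ℕ, Dser (n + 2) ≤ F (n : ℤ) := by
    intro n
    have h1 : Dser (n + 2) ≤ U ((n : ℤ) + 1) := by
      have h2 := hmain (n + 1)
      have h3 : ((n + 1 : ℕ) : ℤ) = (n : ℤ) + 1 := by push_cast; ring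
      rw [h3] at h2
      exact h2
    exact le_trans h1 (hUF _ _ (by omega))
  refine ⟨part1, fun N => ⟨⟨N + 2, part1 N⟩, ?_⟩⟩
  -- finite-dimensionality part
  refine ⟨((Finset.range N).image fun k : ℕ => L (k : ℤ)) ∪
    ((Finset.range N).image fun k : ℕ => Mg (k : ℤ)) ∪
    ((Finset.range N).image fun k : ℕ => Y (k : ℤ)), ?_⟩
  set S : Finset g := ((Finset.range N).image fun k : ℕ => L (k : ℤ)) ∪
    ((Finset.range N).image fun k : ℕ => Mg (k : ℤ)) ∪
    ((Finset.range N).image fun k : ℕ => Y (k : ℤ)) with hS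
  have hmemS : ∀ x : g, x ∈ S → x ∈ Submodule.span ℂ (S : Set g) ⊔ F (N : ℤ) :=
    fun x hx => Submodule.mem_sup_left (Submodule.subset_span hx)
  have hmemF : ∀ x : g, x ∈ F (N : ℤ) → x ∈ Submodule.span ℂ (S : Set g) ⊔ F (N : ℤ) :=
    fun x hx => Submodule.mem_sup_right hx
  rw [hF 0]
  apply Submodule.span_le.2
  rintro x (((⟨i, hi, rfl⟩ | ⟨i, hi, rfl⟩) | ⟨i, hi, rfl⟩)) <;>
    simp only [Set.mem_setOf_eq] at hi
  · rcases lt_or_ge i (N : ℤ) with h | h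
    · apply hmemS
      simp only [hS, Finset.mem_union, Finset.mem_image, Finset.mem_range]
      exact Or.inl (Or.inl ⟨i.toNat, by omega, by rw [Int.toNat_of_nonneg hi]⟩)
    · exact hmemF _ (by rw [hF]; exact Submodule.subset_span (Or.inl (Or.inl ⟨i, h, rfl⟩)))
  · rcases lt_or_ge i (N : ℤ) with h | h
    · apply hmemS
      simp only [hS, Finset.mem_union, Finset.mem_image, Finset.mem_range]
      exact Or.inl (Or.inr ⟨i.toNat, by omega, by rw [Int.toNat_of_nonneg hi]⟩)
    · exact hmemF _ (by rw [hF]; exact Submodule.subset_span (Or.inl (Or.inr ⟨i, h, rfl⟩)))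
  · rcases lt_or_ge i (N : ℤ) with h | h
    · apply hmemS
      simp only [hS, Finset.mem_union, Finset.mem_image, Finset.mem_range]
      exact Or.inr ⟨i.toNat, by omega, by rw [Int.toNat_of_nonneg hi]⟩
    · exact hmemF _ (by rw [hF]; exact Submodule.subset_span (Or.inr ⟨i, h, rfl⟩))
end

section
/- If a = 3/2, then the derived subalgebra [L(3/2,b)_0, L(3/2,b)_0] equals ℂY_{1/2} + L(3/2,b)_1, where L(a,b)_n = span{L_i, M_i, Y_{i+1/2} : i ≥ n}. -/
/-!
At `a = 3/2` the term `(2a − 3)(m + 1) M_{m+n}` of `⁅L_m, M_n⁆` vanishes, so the only bracket of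
generators of `L(3/2,b)_0` with an index-`0` component is `⁅L_0, Y_{1/2}⁆ = -½ Y_{1/2} + b Y_{3/2}`
(`⁅L_0, L_0⁆ = 0` and `⁅L_0, M_0⁆ = 2b M_1`); hence the derived algebra lies in `ℂY_{1/2} + L(3/2,b)_1`.
Conversely `⁅L_0, L_i⁆ = -i L_i`, while `⁅L_1, X_{i-1}⁆ - ⁅L_0, X_i⁆` is a nonzero multiple of `X_i`
for `X = Y, M` (the `b`-terms cancel), and then `⁅L_0, Y_{1/2}⁆` gives `Y_{1/2}` itself.
-/

open Submodule

section BracketSpan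

variable {R A : Type*} [CommRing R] [LieRing A] [LieAlgebra R A]

/-- `[V, V]` for a submodule `V` that need not be a Lie subalgebra. -/
def bracketSpan (V : Submodule R A) : Submodule R A :=
  span R {z | ∃ x ∈ V, ∃ y ∈ V, z = ⁅x, y⁆}

theorem lie_mem_bracketSpan {V : Submodule R A} {x y : A} (hx : x ∈ V) (hy : y ∈ V) :
    ⁅x, y⁆ ∈ bracketSpan V :=
  subset_span ⟨x, hx, y, hy, rfl⟩

theorem bracketSpan_span_le {S : Set A} {N : Submodule R A}
    (h : ∀ x ∈ S, ∀ y ∈ S, ⁅x, y⁆ ∈ N) : bracketSpan (span R S) ≤ N := by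
  have hbil : map₂ (LieModule.toEnd R A A : A →ₗ[R] Module.End R A) (span R S) (span R S) ≤ N := by
    rw [map₂_span_span, span_le]
    rintro _ ⟨x, hx, y, hy, rfl⟩
    simpa using h x hx y hy
  rw [bracketSpan, span_le]
  rintro _ ⟨x, hx, y, hy, rfl⟩
  simpa using map₂_le.mp hbil x hx y hy

end BracketSpan

variable {g : Type*} [LieRing g] [LieAlgebra ℂ g]

/-- The brackets of `L(a,b)_0` at `a = 3/2`, with `Y i` standing for `Y_{i+1/2}`. -/
structure IsL32Family (b : ℂ) (L M Y : ℤ → g) : Prop where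
  lie_L_L : ∀ m n : ℤ, 0 ≤ m → 0 ≤ n → ⁅L m, L n⁆ = ((m : ℂ) - n) • L (m + n)
  lie_L_M : ∀ m n : ℤ, 0 ≤ m → 0 ≤ n →
    ⁅L m, M n⁆ = (-n : ℂ) • M (m + n) + (2 * b) • M (m + n + 1)
  lie_L_Y : ∀ m q : ℤ, 0 ≤ m → 0 ≤ q →
    ⁅L m, Y q⁆ = ((1 / 2 : ℂ) * ((m : ℂ) + 1) - ((q : ℂ) + 1)) • Y (m + q) + b • Y (m + q + 1)
  lie_Y_Y : ∀ p q : ℤ, 0 ≤ p → 0 ≤ q → ⁅Y p, Y q⁆ = ((p : ℂ) - q) • M (p + q + 1)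
  lie_Y_M : ∀ p n : ℤ, 0 ≤ p → 0 ≤ n → ⁅Y p, M n⁆ = 0
  lie_M_M : ∀ m n : ℤ, 0 ≤ m → 0 ≤ n → ⁅M m, M n⁆ = 0

def filtration (L M Y : ℤ → g) (n : ℤ) : Submodule ℂ g :=
  span ℂ ((L '' {i | n ≤ i}) ∪ (M '' {i | n ≤ i}) ∪ (Y '' {i | n ≤ i}))

section Filtration

variable {L M Y : ℤ → g} {n i : ℤ}

theorem L_mem_filtration (hi : n ≤ i) : L i ∈ filtration L M Y n :=
  subset_span (Or.inl (Or.inl ⟨i, hi, rfl⟩))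

theorem M_mem_filtration (hi : n ≤ i) : M i ∈ filtration L M Y n :=
  subset_span (Or.inl (Or.inr ⟨i, hi, rfl⟩))

theorem Y_mem_filtration (hi : n ≤ i) : Y i ∈ filtration L M Y n :=
  subset_span (Or.inr ⟨i, hi, rfl⟩)

theorem filtration_le {N : Submodule ℂ g} (hL : ∀ i, n ≤ i → L i ∈ N)
    (hM : ∀ i, n ≤ i → M i ∈ N) (hY : ∀ i, n ≤ i → Y i ∈ N) : filtration L M Y n ≤ N := by
  rw [filtration, span_le]
  rintro _ ((⟨i, hi, rfl⟩ | ⟨i, hi, rfl⟩) | ⟨i, hi, rfl⟩)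
  exacts [hL i hi, hM i hi, hY i hi]

theorem Y_mem_sup_filtration_one (hi : 0 ≤ i) : Y i ∈ span ℂ {Y 0} ⊔ filtration L M Y 1 := by
  obtain rfl | hi := hi.eq_or_lt
  · exact mem_sup_left (mem_span_singleton_self _)
  · exact mem_sup_right (Y_mem_filtration hi)

end Filtration

namespace IsL32Family

variable {b : ℂ} {L M Y : ℤ → g} {i : ℤ}

theorem lie_L_zero_L (h : IsL32Family b L M Y) (hi : 0 ≤ i) : ⁅L 0, L i⁆ = (-i : ℂ) • L i := by
  simp [h.lie_L_L 0 i le_rfl hi]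

theorem lie_L_zero_Y_zero (h : IsL32Family b L M Y) : ⁅L 0, Y 0⁆ = (-1 / 2 : ℂ) • Y 0 + b • Y 1 := by
  rw [h.lie_L_Y 0 0 le_rfl le_rfl]
  norm_num

theorem lie_L_one_sub_lie_L_zero_M (h : IsL32Family b L M Y) (hi : 1 ≤ i) :
    ⁅L 1, M (i - 1)⁆ - ⁅L 0, M i⁆ = M i := by
  rw [h.lie_L_M 1 (i - 1) zero_le_one (by omega), h.lie_L_M 0 i le_rfl (by omega)]
  simp only [add_sub_cancel, zero_add, Int.cast_sub, Int.cast_one]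
  module

theorem lie_L_one_sub_lie_L_zero_Y (h : IsL32Family b L M Y) (hi : 1 ≤ i) :
    ⁅L 1, Y (i - 1)⁆ - ⁅L 0, Y i⁆ = (3 / 2 : ℂ) • Y i := by
  rw [h.lie_L_Y 1 (i - 1) zero_le_one (by omega), h.lie_L_Y 0 i le_rfl (by omega)]
  simp only [add_sub_cancel, zero_add, Int.cast_sub, Int.cast_one, Int.cast_zero]
  module

local notation "D" => bracketSpan (filtration L M Y 0)

theorem L_mem_bracketSpan (h : IsL32Family b L M Y) (hi : 1 ≤ i) : L i ∈ D := by
  have hi' : (i : ℂ) ≠ 0 := by exact_mod_cast (by omega : i ≠ 0)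
  have hL : L i = (-1 / (i : ℂ)) • ⁅L 0, L i⁆ := by
    rw [h.lie_L_zero_L (by omega), smul_smul, div_mul_eq_mul_div, neg_one_mul, neg_neg,
      div_self hi', one_smul]
  rw [hL]
  exact smul_mem _ _ (lie_mem_bracketSpan (L_mem_filtration le_rfl) (L_mem_filtration (by omega)))

theorem M_mem_bracketSpan (h : IsL32Family b L M Y) (hi : 1 ≤ i) : M i ∈ D := by
  rw [← h.lie_L_one_sub_lie_L_zero_M hi]
  exact sub_mem (lie_mem_bracketSpan (L_mem_filtration zero_le_one) (M_mem_filtration (by omega)))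
    (lie_mem_bracketSpan (L_mem_filtration le_rfl) (M_mem_filtration (by omega)))

theorem Y_mem_bracketSpan (h : IsL32Family b L M Y) (hi : 1 ≤ i) : Y i ∈ D := by
  have hY : Y i = (2 / 3 : ℂ) • (⁅L 1, Y (i - 1)⁆ - ⁅L 0, Y i⁆) := by
    rw [h.lie_L_one_sub_lie_L_zero_Y hi, smul_smul]
    norm_num
  rw [hY]
  exact smul_mem _ _ (sub_mem
    (lie_mem_bracketSpan (L_mem_filtration zero_le_one) (Y_mem_filtration (by omega)))
    (lie_mem_bracketSpan (L_mem_filtration le_rfl) (Y_mem_filtration (by omega))))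

theorem Y_zero_mem_bracketSpan (h : IsL32Family b L M Y) : Y 0 ∈ D := by
  have hY : Y 0 = (-2 : ℂ) • ⁅L 0, Y 0⁆ + (2 * b) • Y 1 := by
    rw [h.lie_L_zero_Y_zero]
    module
  rw [hY]
  exact add_mem (smul_mem _ _ (lie_mem_bracketSpan (L_mem_filtration le_rfl)
    (Y_mem_filtration le_rfl))) (smul_mem _ _ (h.Y_mem_bracketSpan le_rfl))

theorem sup_filtration_one_le_bracketSpan (h : IsL32Family b L M Y) :
    span ℂ {Y 0} ⊔ filtration L M Y 1 ≤ D :=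
  sup_le (span_le.mpr (Set.singleton_subset_iff.mpr h.Y_zero_mem_bracketSpan))
    (filtration_le (fun _ ↦ h.L_mem_bracketSpan) (fun _ ↦ h.M_mem_bracketSpan)
      (fun _ ↦ h.Y_mem_bracketSpan))

local notation "S" => span ℂ {Y 0} ⊔ filtration L M Y 1

theorem lie_L_L_mem (h : IsL32Family b L M Y) {m n : ℤ} (hm : 0 ≤ m) (hn : 0 ≤ n) :
    ⁅L m, L n⁆ ∈ S := by
  obtain ⟨rfl, rfl⟩ | hmn : (m = 0 ∧ n = 0) ∨ 1 ≤ m + n := by omega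
  · simp
  · rw [h.lie_L_L m n hm hn]
    exact smul_mem _ _ (mem_sup_right (L_mem_filtration hmn))

theorem lie_L_M_mem (h : IsL32Family b L M Y) {m n : ℤ} (hm : 0 ≤ m) (hn : 0 ≤ n) :
    ⁅L m, M n⁆ ∈ S := by
  rw [h.lie_L_M m n hm hn]
  refine add_mem ?_ (smul_mem _ _ (mem_sup_right (M_mem_filtration (by omega))))
  obtain rfl | hn := hn.eq_or_lt
  · simp
  · exact smul_mem _ _ (mem_sup_right (M_mem_filtration (by omega)))

theorem lie_L_Y_mem (h : IsL32Family b L M Y) {m n : ℤ} (hm : 0 ≤ m) (hn : 0 ≤ n) :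
    ⁅L m, Y n⁆ ∈ S := by
  rw [h.lie_L_Y m n hm hn]
  exact add_mem (smul_mem _ _ (Y_mem_sup_filtration_one (by omega)))
    (smul_mem _ _ (Y_mem_sup_filtration_one (by omega)))

theorem lie_Y_Y_mem (h : IsL32Family b L M Y) {m n : ℤ} (hm : 0 ≤ m) (hn : 0 ≤ n) :
    ⁅Y m, Y n⁆ ∈ S := by
  rw [h.lie_Y_Y m n hm hn]
  exact smul_mem _ _ (mem_sup_right (M_mem_filtration (by omega)))

theorem bracketSpan_le_sup_filtration_one (h : IsL32Family b L M Y) : D ≤ S := by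
  refine bracketSpan_span_le ?_
  have swap {x y : g} (hxy : ⁅y, x⁆ ∈ S) : ⁅x, y⁆ ∈ S := by
    rw [← lie_skew]
    exact neg_mem hxy
  rintro _ ((⟨m, hm, rfl⟩ | ⟨m, hm, rfl⟩) | ⟨m, hm, rfl⟩)
    _ ((⟨n, hn, rfl⟩ | ⟨n, hn, rfl⟩) | ⟨n, hn, rfl⟩)
  · exact h.lie_L_L_mem hm hn
  · exact h.lie_L_M_mem hm hn
  · exact h.lie_L_Y_mem hm hn
  · exact swap (h.lie_L_M_mem hn hm)
  · simp [h.lie_M_M m n hm hn]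
  · exact swap (by simp [h.lie_Y_M n m hn hm])
  · exact swap (h.lie_L_Y_mem hn hm)
  · simp [h.lie_Y_M m n hm hn]
  · exact h.lie_Y_Y_mem hm hn

end IsL32Family

/-- For `a = 3/2`, the derived subalgebra
`[L(3/2,b)_0, L(3/2,b)_0]` equals `ℂY_{1/2} + L(3/2,b)_1`, where
`L(a,b)_n = span{L_i, M_i, Y_{i+1/2} : i ≥ n}`.  Below the brackets are the
`TSV(a,b)` annihilation-algebra brackets specialized at `a = 3/2`
(so `2a − 3 = 0` and `a − 1 = 1/2`), and `Y i` encodes `Y_{i+1/2}`. -/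
theorem stmt18 (b : ℂ)
    (g : Type) [LieRing g] [LieAlgebra ℂ g]
    (L Y Mg : ℤ → g)
    (hLL : ∀ m n : ℤ, 0 ≤ m → 0 ≤ n →
      ⁅L m, L n⁆ = (((m : ℂ) - (n : ℂ))) • L (m + n))
    (hLM : ∀ m n : ℤ, 0 ≤ m → 0 ≤ n →
      ⁅L m, Mg n⁆ = (-(n : ℂ)) • Mg (m + n) + (2 * b) • Mg (m + n + 1))
    (hLY : ∀ m q : ℤ, 0 ≤ m → 0 ≤ q →
      ⁅L m, Y q⁆ = ((1 / 2 : ℂ) * ((m : ℂ) + 1) - ((q : ℂ) + 1)) • Y (m + q)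
        + b • Y (m + q + 1))
    (hYY : ∀ p q : ℤ, 0 ≤ p → 0 ≤ q →
      ⁅Y p, Y q⁆ = (((p : ℂ) - (q : ℂ))) • Mg (p + q + 1))
    (hYM : ∀ p n : ℤ, 0 ≤ p → 0 ≤ n → ⁅Y p, Mg n⁆ = 0)
    (hMM : ∀ m n : ℤ, 0 ≤ m → 0 ≤ n → ⁅Mg m, Mg n⁆ = 0)
    (F : ℤ → Submodule ℂ g)
    (hF : ∀ n : ℤ, F n = Submodule.span ℂ
      ((L '' {i | n ≤ i}) ∪ (Mg '' {i | n ≤ i}) ∪ (Y '' {i | n ≤ i}))) :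
    Submodule.span ℂ {z : g | ∃ x ∈ F 0, ∃ y ∈ F 0, z = ⁅x, y⁆} =
      Submodule.span ℂ {Y 0} ⊔ F 1 := by
  have h : IsL32Family b L Mg Y := ⟨hLL, hLM, hLY, hYY, hYM, hMM⟩
  obtain rfl : F = filtration L Mg Y := funext hF
  exact le_antisymm h.bracketSpan_le_sup_filtration_one h.sup_filtration_one_le_bracketSpan
end
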